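/- arXiv:1411.5415 — 3 statements merged into one kernel-verified Lean document; each statement's English description precedes it below -/
import Mathlib

section
/- Let n and m be integers with n, m ≥ 2 and n ≡ m (mod 2) (same parity), and let d be any integer (the clock drift). Then there exists an integer t such that simultaneously: (i) for some i with 0 ≤ i ≤ n−2, either t ≡ n·i + d (mod n(n−1)) or t ≡ (n+1)·i + 1 + d (mod n(n−1)); and (ii) for some j with 0 ≤ j ≤ m−2, either t ≡ m·j (mod m(m−1)) or t ≡ (m+1)·j + 1 (mod m(m−1)). Hence two Hedis nodes with same-parity parameters discover each other for any amount of clock drift. -/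
/-!
Every multiple of `n` is an anchor slot, so if `gcd n m ∣ d` two anchor slots meet by the
Chinese remainder theorem. Otherwise let `m ≤ n` (negating the drift swaps the roles) and let
a probing slot `(n + 1) i + 1` of the drifted `n`-schedule meet an anchor of `m`; this needs
`g = gcd m (n (n - 1)) ∣ (n + 1) i + 1 + d`. A prime dividing `n + 1` and `n (n - 1)` divides `2`,
so by the parity assumption `n + 1` is a unit modulo `g`, and a solution `i < g ≤ m ≤ n` exists;
`i = n - 1` would force `g = n = m` and `n ∣ d`.
-/

theorem exists_dvd_sub_and_dvd_of_gcd_dvd {R : Type*} [CommRing R] [IsDomain R]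
    [IsBezout R] [GCDMonoid R] {a b c : R} (h : gcd a b ∣ c) :
    ∃ t, a ∣ t - c ∧ b ∣ t := by
  obtain ⟨x, y, rfl⟩ := (gcd_dvd_iff_exists a b).mp h
  exact ⟨b * y, ⟨-x, by ring⟩, dvd_mul_right b y⟩

theorem Int.exists_mem_Ico_dvd_mul_add {a b : ℤ} (hab : IsCoprime a b) (hb : 0 < b) (c : ℤ) :
    ∃ i, 0 ≤ i ∧ i < b ∧ b ∣ a * i + c := by
  obtain ⟨u, v, huv⟩ := hab
  refine ⟨-u * c % b, Int.emod_nonneg _ hb.ne', Int.emod_lt_of_pos _ hb, ?_⟩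
  refine ⟨c * v - a * (-u * c / b), ?_⟩
  rw [Int.emod_def]
  linear_combination -c * huv

def IsHedisActive (n t : ℤ) : Prop :=
  ∃ i : ℤ, 0 ≤ i ∧ i ≤ n - 2 ∧
    (t ≡ n * i [ZMOD n * (n - 1)] ∨ t ≡ (n + 1) * i + 1 [ZMOD n * (n - 1)])

theorem isHedisActive_sub_iff {n t d : ℤ} :
    IsHedisActive n (t - d) ↔ ∃ i : ℤ, 0 ≤ i ∧ i ≤ n - 2 ∧
      (t ≡ n * i + d [ZMOD n * (n - 1)] ∨ t ≡ (n + 1) * i + 1 + d [ZMOD n * (n - 1)]) := by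
  simp only [IsHedisActive, Int.modEq_iff_dvd, sub_sub_eq_add_sub]

theorem isHedisActive_of_dvd {n t : ℤ} (hn : 2 ≤ n) (h : n ∣ t) : IsHedisActive n t := by
  obtain ⟨k, rfl⟩ := h
  have hpos : 0 < n - 1 := by omega
  exact ⟨k % (n - 1), Int.emod_nonneg k hpos.ne', by linarith [Int.emod_lt_of_pos k hpos],
    Or.inl ((Int.mod_modEq k (n - 1)).symm.mul_left' (c := n))⟩

theorem isCoprime_add_one_gcd_mul_sub_one {n m : ℤ} (hpar : n ≡ m [ZMOD 2]) :
    IsCoprime (n + 1) (gcd m (n * (n - 1))) := by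
  refine isCoprime_of_prime_dvd ?_ fun p hp hpn hpg => ?_
  · rintro ⟨hn, hg⟩
    obtain rfl : n = -1 := by linarith
    norm_num [gcd_eq_zero_iff] at hg
  have hpm : p ∣ m := hpg.trans (gcd_dvd_left _ _)
  apply hp.not_dvd_one
  rcases hp.dvd_or_dvd (hpg.trans (gcd_dvd_right _ _)) with hp_n | hp_n_sub
  · simpa using dvd_sub hpn hp_n
  · have hp_two : p ∣ 2 := by simpa using dvd_sub hpn hp_n_sub
    have hp_n : p ∣ n := by simpa using dvd_sub hpm (hp_two.trans hpar.dvd)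
    simpa using dvd_sub hp_n hp_n_sub

theorem exists_isHedisActive_sub_and_dvd {n m d : ℤ} (hm : 2 ≤ m) (hmn : m ≤ n)
    (hpar : n ≡ m [ZMOD 2]) (hd : ¬gcd n m ∣ d) :
    ∃ t, IsHedisActive n (t - d) ∧ m ∣ t := by
  have hg_pos : 0 < gcd m (n * (n - 1)) := by
    rw [← Int.coe_gcd]
    exact_mod_cast Int.gcd_pos_of_ne_zero_left _ (by omega)
  have hg_le : gcd m (n * (n - 1)) ≤ m := Int.le_of_dvd (by omega) (gcd_dvd_left _ _)
  obtain ⟨i, hi_nonneg, hi_lt, hgi⟩ :=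
    Int.exists_mem_Ico_dvd_mul_add (isCoprime_add_one_gcd_mul_sub_one hpar) hg_pos (1 + d)
  have hi_ne : i ≠ n - 1 := by
    intro hi
    have hgn : gcd m (n * (n - 1)) = n := by omega
    rw [hi, hgn] at hgi
    refine hd ((gcd_dvd_left n m).trans ?_)
    have hnd := dvd_sub hgi (dvd_mul_right n n)
    rwa [show (n + 1) * (n - 1) + (1 + d) - n * n = d by ring] at hnd
  rw [gcd_comm] at hgi
  obtain ⟨t, hnt, hmt⟩ := exists_dvd_sub_and_dvd_of_gcd_dvd hgi
  refine ⟨t, ⟨i, hi_nonneg, by omega, Or.inr (Int.modEq_iff_dvd.mpr ?_).symm⟩, hmt⟩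
  rwa [show t - d - ((n + 1) * i + 1) = t - ((n + 1) * i + (1 + d)) by ring]

theorem exists_isHedisActive_sub_of_le {n m : ℤ} (hm : 2 ≤ m) (hmn : m ≤ n)
    (hpar : n ≡ m [ZMOD 2]) (d : ℤ) : ∃ t, IsHedisActive n (t - d) ∧ IsHedisActive m t := by
  by_cases hd : gcd n m ∣ d
  · obtain ⟨t, hnt, hmt⟩ := exists_dvd_sub_and_dvd_of_gcd_dvd hd
    exact ⟨t, isHedisActive_of_dvd (hm.trans hmn) hnt, isHedisActive_of_dvd hm hmt⟩
  · obtain ⟨t, hnt, hmt⟩ := exists_isHedisActive_sub_and_dvd hm hmn hpar hd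
    exact ⟨t, hnt, isHedisActive_of_dvd hm hmt⟩

theorem exists_isHedisActive_sub {n m : ℤ} (hn : 2 ≤ n) (hm : 2 ≤ m)
    (hpar : n ≡ m [ZMOD 2]) (d : ℤ) : ∃ t, IsHedisActive n (t - d) ∧ IsHedisActive m t := by
  rcases le_total m n with hmn | hnm
  · exact exists_isHedisActive_sub_of_le hm hmn hpar d
  · obtain ⟨t, hmt, hnt⟩ := exists_isHedisActive_sub_of_le hn hnm hpar.symm (-d)
    exact ⟨t + d, by rwa [add_sub_cancel_right], by rwa [← sub_neg_eq_add]⟩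

/-- Hedis guarantees discovery: for integers `n, m ≥ 2` of the same parity and any
clock drift `d`, there is a time `t` that is simultaneously an active (anchor or
probing) slot of the drifted parameter-`n` schedule and of the parameter-`m` schedule. -/
theorem hedis_discovery (n m : ℤ) (hn : 2 ≤ n) (hm : 2 ≤ m)
    (hpar : n ≡ m [ZMOD 2]) (d : ℤ) :
    ∃ t : ℤ,
      (∃ i : ℤ, 0 ≤ i ∧ i ≤ n - 2 ∧
        (t ≡ n * i + d [ZMOD (n * (n - 1))] ∨
         t ≡ (n + 1) * i + 1 + d [ZMOD (n * (n - 1))])) ∧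
      (∃ j : ℤ, 0 ≤ j ∧ j ≤ m - 2 ∧
        (t ≡ m * j [ZMOD (m * (m - 1))] ∨
         t ≡ (m + 1) * j + 1 [ZMOD (m * (m - 1))])) := by
  obtain ⟨t, hnt, hmt⟩ := exists_isHedisActive_sub hn hm hpar d
  exact ⟨t, isHedisActive_sub_iff.mp hnt, hmt⟩
end

section
/- Let n and m be integers with m > n ≥ 2 and m ≡ n (mod 2). Then for every integer d there exists an index j with 0 ≤ j ≤ m−2 such that (m+1)·j ≡ d − 1 (mod gcd(n, m·(m−1))). Consequently, the anchor-probing overlap between the Hedis schedules with parameters n and m occurs for every clock drift d. -/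
/-! Write `g = gcd(n, m(m-1))`. Since `g ≤ n ≤ m - 1`, the indices `0, …, g-1` all lie in
`[0, m-2]`, so it suffices that `m + 1` is invertible modulo `g`. From
`m(m-1) = (m+1)(m-2) + 2`, a common divisor of `m + 1` and `g` divides `2`; it cannot be `2`,
since then `n` would be even while `m` is odd. -/

theorem exists_mul_modEq_of_isCoprime {a g : ℤ} (hg : 0 < g) (h : IsCoprime a g) (c : ℤ) :
    ∃ j, 0 ≤ j ∧ j < g ∧ a * j ≡ c [ZMOD g] := by
  obtain ⟨u, v, huv⟩ := h
  refine ⟨u * c % g, Int.emod_nonneg _ hg.ne', Int.emod_lt_of_pos _ hg, ?_⟩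
  calc a * (u * c % g) ≡ a * (u * c) [ZMOD g] := (Int.mod_modEq _ _).mul_left a
    _ = c + g * (-(v * c)) := by linear_combination c * huv
    _ ≡ c [ZMOD g] := Int.modEq_add_fac_self

theorem dvd_two_of_dvd_add_one_of_dvd_mul_sub_one {k m : ℤ} (h₁ : k ∣ m + 1)
    (h₂ : k ∣ m * (m - 1)) : k ∣ 2 := by
  have h : 2 = m * (m - 1) - (m + 1) * (m - 2) := by ring
  rw [h]
  exact h₂.sub (h₁.mul_right _)

theorem isCoprime_add_one_of_dvd_of_dvd_mul_sub_one {n m g : ℤ} (hpar : m ≡ n [ZMOD 2])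
    (hgn : g ∣ n) (hgm : g ∣ m * (m - 1)) : IsCoprime (m + 1) g := by
  rw [Int.isCoprime_iff_gcd_eq_one]
  have hk₁ : ((m + 1).gcd g : ℤ) ∣ m + 1 := Int.gcd_dvd_left _ _
  have hk₂ : ((m + 1).gcd g : ℤ) ∣ g := Int.gcd_dvd_right _ _
  have hk : (m + 1).gcd g ∣ 2 := Int.natCast_dvd_natCast.mp <|
    dvd_two_of_dvd_add_one_of_dvd_mul_sub_one hk₁ (hk₂.trans hgm)
  rcases (Nat.dvd_prime Nat.prime_two).mp hk with h | h
  · exact h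
  · rw [h] at hk₁ hk₂
    have hn : (2 : ℤ) ∣ n := hk₂.trans hgn
    have hnm : (2 : ℤ) ∣ n - m := hpar.dvd
    omega

/-- For integers `m > n ≥ 2` of the same parity and any drift `d`, some index
`j ∈ [0, m-2]` satisfies `(m+1)·j ≡ d − 1 (mod gcd(n, m·(m−1)))`; hence the
anchor-probing overlap between the Hedis schedules occurs for every clock drift. -/
theorem hedis_anchor_probing_always_solvable (n m : ℤ) (hn : 2 ≤ n) (hnm : n < m)
    (hpar : m ≡ n [ZMOD 2]) (d : ℤ) :
    ∃ j : ℤ, 0 ≤ j ∧ j ≤ m - 2 ∧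
      (m + 1) * j ≡ d - 1 [ZMOD ((Int.gcd n (m * (m - 1)) : ℕ) : ℤ)] := by
  have hn₀ : 0 < n := by omega
  have hg_pos : (0 : ℤ) < Int.gcd n (m * (m - 1)) := by
    exact_mod_cast Int.gcd_pos_of_ne_zero_left _ hn₀.ne'
  have hg_le : (Int.gcd n (m * (m - 1)) : ℤ) ≤ n := Int.le_of_dvd hn₀ (Int.gcd_dvd_left _ _)
  obtain ⟨j, hj₀, hj, hmod⟩ :=
    exists_mul_modEq_of_isCoprime hg_pos (isCoprime_add_one_of_dvd_of_dvd_mul_sub_one hpar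
      (Int.gcd_dvd_left _ _) (Int.gcd_dvd_right _ _)) (d - 1)
  exact ⟨j, hj₀, by omega, hmod⟩
end

section
/- Let n ≥ 2 be an integer. The set of active slots of the Hedis schedule with parameter n, namely {t : 0 ≤ t < n(n−1) and t = n·i or t = (n+1)·i + 1 for some i ∈ {0,…,n−2}}, has exactly 2(n−1) elements; in particular all 2(n−1) listed slots lie in [0, n(n−1)) and are pairwise distinct, so the duty cycle of the schedule equals 2(n−1)/(n(n−1)) = 2/n. -/
/-!
The `n - 1` anchor slots `n·i` and the `n - 1` probing slots `(n+1)·i + 1 = n·i + (i + 1)` are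
each pairwise distinct, since the maps `i ↦ n·i` and `i ↦ (n+1)·i + 1` are injective. The two
families are disjoint because anchor slots are `≡ 0` and probing slots are `≡ i + 1 ∈ [1, n)`
modulo `n`, and all of them lie below `n(n−1)`.
-/

open Finset

theorem mul_ne_mul_add_of_pos_of_lt {n r : ℕ} (hr : 0 < r) (hrn : r < n) (i j : ℕ) :
    n * i ≠ n * j + r := by
  intro h
  have hmod := congrArg (· % n) h
  simp only [Nat.mul_mod_right, Nat.mul_add_mod, Nat.mod_eq_of_lt hrn] at hmod
  omega

section Hedis

variable {n : ℕ}

theorem hedis_anchor_lt {i : ℕ} (hi : i < n - 1) : n * i < n * (n - 1) :=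
  Nat.mul_lt_mul_of_pos_left hi (by omega)

theorem hedis_probing_lt {i : ℕ} (hi : i < n - 1) : (n + 1) * i + 1 < n * (n - 1) := by
  obtain ⟨m, rfl⟩ : ∃ m, n = m + 1 := ⟨n - 1, by omega⟩
  simp only [Nat.add_sub_cancel] at hi ⊢
  nlinarith

theorem hedis_anchor_ne_probing {i j : ℕ} (hj : j < n - 1) :
    n * i ≠ (n + 1) * j + 1 := by
  rw [show (n + 1) * j + 1 = n * j + (j + 1) by ring]
  exact mul_ne_mul_add_of_pos_of_lt (Nat.succ_pos j) (by omega) i j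

theorem hedis_activeSlots_eq :
    (range (n * (n - 1))).filter (fun t => ∃ i < n - 1, t = n * i ∨ t = (n + 1) * i + 1) =
      (range (n - 1)).image (n * ·) ∪ (range (n - 1)).image (fun i => (n + 1) * i + 1) := by
  ext t
  simp only [mem_filter, mem_range, mem_union, mem_image]
  constructor
  · rintro ⟨-, i, hi, rfl | rfl⟩
    exacts [Or.inl ⟨i, hi, rfl⟩, Or.inr ⟨i, hi, rfl⟩]
  · rintro (⟨i, hi, rfl⟩ | ⟨i, hi, rfl⟩)
    exacts [⟨hedis_anchor_lt hi, i, hi, Or.inl rfl⟩, ⟨hedis_probing_lt hi, i, hi, Or.inr rfl⟩]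

theorem card_hedis_activeSlots (hn : 0 < n) :
    ((range (n * (n - 1))).filter
      (fun t => ∃ i < n - 1, t = n * i ∨ t = (n + 1) * i + 1)).card = 2 * (n - 1) := by
  have hdisj : Disjoint ((range (n - 1)).image (n * ·))
      ((range (n - 1)).image (fun i => (n + 1) * i + 1)) := by
    simp only [disjoint_left, mem_image, mem_range]
    rintro _ ⟨i, -, rfl⟩ ⟨j, hj, hij⟩
    exact hedis_anchor_ne_probing hj hij.symm
  rw [hedis_activeSlots_eq, card_union_of_disjoint hdisj,
    card_image_of_injective _ (mul_right_injective₀ hn.ne'),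
    card_image_of_injective (f := fun i => (n + 1) * i + 1) _
      ((add_left_injective 1).comp (mul_right_injective₀ (Nat.succ_ne_zero n))),
    card_range, two_mul]

end Hedis

/-- The set of active slots of the Hedis schedule with parameter `n ≥ 2`,
`{t ∈ [0, n(n−1)) : t = n·i or t = (n+1)·i + 1 for some i ∈ {0,…,n−2}}`,
has exactly `2(n−1)` elements, so the duty cycle equals `2(n−1)/(n(n−1)) = 2/n`. -/
theorem hedis_duty_cycle (n : ℕ) (hn : 2 ≤ n) :
    ((Finset.range (n * (n - 1))).filter
      (fun t => ∃ i < n - 1, t = n * i ∨ t = (n + 1) * i + 1)).card = 2 * (n - 1) ∧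
    ((2 * (n - 1) : ℕ) : ℚ) / ((n * (n - 1) : ℕ) : ℚ) = 2 / (n : ℚ) := by
  refine ⟨card_hedis_activeSlots (by omega), ?_⟩
  have hperiod : ((n - 1 : ℕ) : ℚ) ≠ 0 := by exact_mod_cast (by omega : n - 1 ≠ 0)
  rw [Nat.cast_mul, Nat.cast_mul, Nat.cast_ofNat, mul_div_mul_right _ _ hperiod]
end
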